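/- arXiv:2304.00318 — 5 statements merged into one kernel-verified Lean document; each statement's English description precedes it below -/
import Mathlib

section
/- Let n and m be positive natural numbers, τ > 0 a real number, f : ℝ^n × ℝ^n → ℝ^n continuous, and w : ℝ → ℝ^n a continuous function that is mτ-periodic (w(t + mτ) = w(t) for all t). For j = 1, …, m define c_j : [−τ, 0] → ℝ^n by c_j(s) := w(jτ + s). Then the following are equivalent: (i) for every t ∈ [0, mτ], w(t) = w(0) + ∫₀^t f(w(r), w(r − τ)) dr; (ii) for every s ∈ [−τ, 0], c_1(s) = c_m(0) + ∫_{−τ}^s f(c_1(r), c_m(r)) dr, and for every j = 2, …, m and every s ∈ [−τ, 0], c_j(s) = c_{j−1}(0) + ∫_{−τ}^s f(c_j(r), c_{j−1}(r)) dr. -/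
/-- periodic solutions and the cyclic system of segments.
For a continuous `mτ`-periodic `w : ℝ → ℝⁿ`, solving the integral form of the
DDE on `[0, mτ]` is equivalent to the segments `c_j(s) := w(jτ + s)`,
`s ∈ [−τ, 0]`, solving the cyclic system of integral equations. -/
theorem dde_periodic_orbit_segments_equiv
    (n m : ℕ) (hn : 0 < n) (hm : 0 < m) (τ : ℝ) (hτ : 0 < τ)
    (f : (Fin n → ℝ) → (Fin n → ℝ) → Fin n → ℝ)
    (hf : Continuous fun p : (Fin n → ℝ) × (Fin n → ℝ) => f p.1 p.2)
    (w : ℝ → Fin n → ℝ) (hw : Continuous w)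
    (hper : ∀ t : ℝ, w (t + m * τ) = w t)
    (c : ℕ → ℝ → Fin n → ℝ) (hc : ∀ j : ℕ, ∀ s : ℝ, c j s = w ((j : ℝ) * τ + s)) :
    (∀ t ∈ Set.Icc (0 : ℝ) (m * τ),
        w t = w 0 + ∫ r in (0 : ℝ)..t, f (w r) (w (r - τ))) ↔
    ((∀ s ∈ Set.Icc (-τ) (0 : ℝ),
        c 1 s = c m 0 + ∫ r in (-τ)..s, f (c 1 r) (c m r)) ∧
      (∀ j : ℕ, 2 ≤ j → j ≤ m → ∀ s ∈ Set.Icc (-τ) (0 : ℝ),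
        c j s = c (j - 1) 0 + ∫ r in (-τ)..s, f (c j r) (c (j - 1) r))) := by
  have hm1 : (1 : ℝ) ≤ (m : ℝ) := by exact_mod_cast hm
  set F : ℝ → Fin n → ℝ := fun r => f (w r) (w (r - τ)) with hFdef
  have hF : Continuous F :=
    hf.comp (hw.prodMk (hw.comp (continuous_sub_right τ)))
  have hInt : ∀ a b : ℝ, IntervalIntegrable F MeasureTheory.volume a b :=
    fun a b => hF.intervalIntegrable a b
  have hperm : ∀ r : ℝ, w ((m : ℝ) * τ + r) = w r := fun r => by
    rw [add_comm]; exact hper r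
  -- translation of the first segment equation
  have trans1 : ∀ s : ℝ,
      (c 1 s = c m 0 + ∫ r in (-τ)..s, f (c 1 r) (c m r)) ↔
      (w (τ + s) = w 0 + ∫ r in (0 : ℝ)..(τ + s), F r) := by
    intro s
    have h1 : c 1 s = w (τ + s) := by rw [hc]; norm_num
    have h2 : c m 0 = w 0 := by rw [hc, add_zero, ← add_zero ((m:ℝ) * τ), hperm]
    have h3 : (∫ r in (-τ)..s, f (c 1 r) (c m r)) = ∫ r in (0 : ℝ)..(τ + s), F r := by
      have hpt : ∀ r : ℝ, f (c 1 r) (c m r) = F (τ + r) := by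
        intro r
        rw [hc, hc, hperm, hFdef]
        simp only [Nat.cast_one, one_mul]
        congr 1
        ring
      simp only [hpt]
      simpa using intervalIntegral.integral_comp_add_left F τ (a := -τ) (b := s)
    rw [h1, h2, h3]
  -- translation of the later segment equations
  have trans2 : ∀ j : ℕ, 2 ≤ j → ∀ s : ℝ,
      (c j s = c (j - 1) 0 + ∫ r in (-τ)..s, f (c j r) (c (j - 1) r)) ↔
      (w ((j : ℝ) * τ + s) = w (((j : ℝ) - 1) * τ) +
        ∫ r in (((j : ℝ) - 1) * τ)..((j : ℝ) * τ + s), F r) := by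
    intro j hj s
    have hcast : ((j - 1 : ℕ) : ℝ) = (j : ℝ) - 1 := by
      have : 1 ≤ j := le_trans one_le_two hj
      push_cast [Nat.cast_sub this]; ring
    have h1 : c j s = w ((j : ℝ) * τ + s) := hc j s
    have h2 : c (j - 1) 0 = w (((j : ℝ) - 1) * τ) := by rw [hc, hcast, add_zero]
    have h3 : (∫ r in (-τ)..s, f (c j r) (c (j - 1) r)) =
        ∫ r in (((j : ℝ) - 1) * τ)..((j : ℝ) * τ + s), F r := by
      have hpt : ∀ r : ℝ, f (c j r) (c (j - 1) r) = F ((j : ℝ) * τ + r) := by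
        intro r
        rw [hc, hc, hcast, hFdef]
        congr 2
        ring
      simp only [hpt]
      rw [intervalIntegral.integral_comp_add_left F ((j : ℝ) * τ) (a := -τ) (b := s)]
      congr 1
      ring
    rw [h1, h2, h3]
  constructor
  · -- forward direction
    intro h
    have step : ∀ a b : ℝ, 0 ≤ a → a ≤ (m : ℝ) * τ → 0 ≤ b → b ≤ (m : ℝ) * τ →
        w b = w a + ∫ r in a..b, F r := by
      intro a b ha1 ha2 hb1 hb2
      rw [h b ⟨hb1, hb2⟩, h a ⟨ha1, ha2⟩, add_assoc,
        intervalIntegral.integral_add_adjacent_intervals (hInt 0 a) (hInt a b)]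
    constructor
    · intro s hs
      obtain ⟨hs1, hs2⟩ := hs
      rw [trans1 s]
      exact step 0 (τ + s) le_rfl (by nlinarith) (by linarith) (by nlinarith)
    · intro j hj2 hjm s hs
      obtain ⟨hs1, hs2⟩ := hs
      have hjm' : (j : ℝ) ≤ (m : ℝ) := by exact_mod_cast hjm
      have hj2' : (2 : ℝ) ≤ (j : ℝ) := by exact_mod_cast hj2
      rw [trans2 j hj2 s]
      exact step (((j : ℝ) - 1) * τ) ((j : ℝ) * τ + s)
        (by nlinarith) (by nlinarith) (by nlinarith) (by nlinarith)
  · -- backward direction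
    rintro ⟨h1, h2⟩
    have H : ∀ j : ℕ, 1 ≤ j → j ≤ m → ∀ t : ℝ,
        ((j : ℝ) - 1) * τ ≤ t → t ≤ (j : ℝ) * τ →
        w t = w (((j : ℝ) - 1) * τ) + ∫ r in (((j : ℝ) - 1) * τ)..t, F r := by
      intro j hj1 hjm t ht1 ht2
      have hj1' : (1 : ℝ) ≤ (j : ℝ) := by exact_mod_cast hj1
      have hsmem : t - (j : ℝ) * τ ∈ Set.Icc (-τ) (0 : ℝ) :=
        ⟨by linarith [ht1], by linarith [ht2]⟩
      rcases eq_or_lt_of_le hj1 with hj | hj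
      · -- j = 1
        have := (trans1 (t - (j : ℝ) * τ)).mp (by
          have hjone : j = 1 := hj.symm
          subst hjone
          simpa using h1 (t - (1 : ℝ) * τ) (by simpa using hsmem))
        have hjone : (j : ℝ) = 1 := by exact_mod_cast hj.symm
        rw [hjone] at this ⊢
        convert this using 3 <;> ring
      · -- j ≥ 2
        have hj2 : 2 ≤ j := hj
        have := (trans2 j hj2 (t - (j : ℝ) * τ)).mp (h2 j hj2 hjm _ hsmem)
        convert this using 3 <;> ring
    have node : ∀ j : ℕ, j ≤ m →
        w ((j : ℝ) * τ) = w 0 + ∫ r in (0 : ℝ)..((j : ℝ) * τ), F r := by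
      intro j
      induction j with
      | zero => intro _; simp
      | succ k ih =>
        intro hk
        have hk' : k ≤ m := le_trans (Nat.le_succ k) hk
        have hstep := H (k + 1) (Nat.succ_le_succ (Nat.zero_le k)) hk
          (((k : ℝ) + 1) * τ) (by push_cast; nlinarith) (by push_cast; exact le_rfl)
        have hcast : ((k + 1 : ℕ) : ℝ) = (k : ℝ) + 1 := by push_cast; ring
        rw [hcast] at hstep ⊢
        have hsub : ((k : ℝ) + 1) - 1 = (k : ℝ) := by ring
        rw [hsub] at hstep
        rw [hstep, ih hk', add_assoc,
          intervalIntegral.integral_add_adjacent_intervals (hInt 0 _) (hInt _ _)]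
    intro t ht
    obtain ⟨ht1, ht2⟩ := ht
    rcases eq_or_lt_of_le ht1 with h0 | h0
    · simp [← h0]
    · set j : ℕ := ⌈t / τ⌉₊ with hj
      have hdpos : 0 < t / τ := div_pos h0 hτ
      have hj1 : 1 ≤ j := Nat.one_le_iff_ne_zero.mpr (by
        simp only [hj, ne_eq, Nat.ceil_eq_zero, not_le]
        exact hdpos)
      have hjm : j ≤ m := Nat.ceil_le.mpr (by
        rw [div_le_iff₀ hτ]; exact ht2)
      have hj1' : (1 : ℝ) ≤ (j : ℝ) := by exact_mod_cast hj1
      have htle : t ≤ (j : ℝ) * τ := by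
        have := Nat.le_ceil (t / τ)
        calc t = (t / τ) * τ := by field_simp
        _ ≤ (j : ℝ) * τ := by nlinarith [Nat.le_ceil (t / τ)]
      have htge : ((j : ℝ) - 1) * τ ≤ t := by
        have hlt : (⌈t / τ⌉₊ : ℝ) < t / τ + 1 := Nat.ceil_lt_add_one (le_of_lt hdpos)
        have : ((j : ℝ) - 1) * τ < (t / τ) * τ := by
          apply mul_lt_mul_of_pos_right _ hτ
          rw [hj]; linarith
        calc ((j : ℝ) - 1) * τ ≤ (t / τ) * τ := le_of_lt this
        _ = t := by field_simp
      have hnode := node (j - 1) (le_trans (Nat.sub_le j 1) hjm)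
      have hcast : ((j - 1 : ℕ) : ℝ) = (j : ℝ) - 1 := by
        push_cast [Nat.cast_sub hj1]; ring
      rw [hcast] at hnode
      rw [H j hj1 hjm t htge htle, hnode, add_assoc,
        intervalIntegral.integral_add_adjacent_intervals (hInt 0 _) (hInt _ _)]
end

section
/- Let V be a vector space over ℂ, m a positive natural number, and A₁, …, A_m : V → V linear maps. Let λ ∈ ℂ with λ ≠ 0, let k ∈ {0, …, m−1}, and set λ_k := λ · exp(2πik/m). Let v ∈ V and define v₁ := v and v_j := A_{j−1}(v_{j−1}) for j = 2, …, m. Define the block-cyclic linear map M : V^m → V^m by M(x₁, …, x_m) := (A_m(x_m), A₁(x₁), …, A_{m−1}(x_{m−1})), and set w := (v₁, λ_k^{−1} v₂, …, λ_k^{−(m−1)} v_m) ∈ V^m. Then M(w) = λ_k · w if and only if (A_m ∘ A_{m−1} ∘ ⋯ ∘ A₁)(v) = λ^m · v. -/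
/-!
Write `w = (v₁, μ⁻¹ v₂, …, μ⁻⁽ᵐ⁻¹⁾ v_m)`. Because `vⱼ₊₁ = Aⱼ vⱼ`, the eigen-equation `M w = μ w`
holds automatically in blocks `2, …, m`; in block `1` it reads `A_m (μ⁻⁽ᵐ⁻¹⁾ v_m) = μ v`, that is
`(A_m ∘ ⋯ ∘ A₁) v = μᵐ v`. For `μ = λ_k` this is the claim, as `λ_kᵐ = λᵐ`: `exp (2πik/m)` is an
`m`-th root of unity.
-/

open Complex Real

theorem Complex.exp_two_pi_mul_I_mul_div_pow_self (k : ℕ) {m : ℕ} (hm : m ≠ 0) :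
    exp (2 * π * I * k / m) ^ m = 1 := by
  rw [← exp_nat_mul, mul_div_cancel₀ _ (Nat.cast_ne_zero.mpr hm), mul_comm]
  exact exp_nat_mul_two_pi_mul_I k

section BlockCyclic

variable {K V : Type*} [DivisionRing K] [AddCommGroup V] [Module K V]

def blockCyclic {m : ℕ} [NeZero m] (A : Fin m → V →ₗ[K] V) : (Fin m → V) →ₗ[K] Fin m → V :=
  LinearMap.pi fun i => A (i - 1) ∘ₗ LinearMap.proj (i - 1)

@[simp]
theorem blockCyclic_apply {m : ℕ} [NeZero m] (A : Fin m → V →ₗ[K] V) (x : Fin m → V)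
    (i : Fin m) :
    blockCyclic A x i = A (i - 1) (x (i - 1)) :=
  rfl

def scaledOrbit {m : ℕ} (μ : K) (u : Fin m → V) : Fin m → V :=
  fun j => μ ^ (-(j : ℤ)) • u j

@[simp]
theorem scaledOrbit_apply {m : ℕ} (μ : K) (u : Fin m → V) (j : Fin m) :
    scaledOrbit μ u j = μ ^ (-(j : ℤ)) • u j :=
  rfl

variable {n : ℕ} (A : Fin (n + 1) → V →ₗ[K] V) {μ : K} (u : Fin (n + 1) → V)

theorem blockCyclic_scaledOrbit_succ (hμ : μ ≠ 0)
    (hu : ∀ i : Fin n, u i.succ = A i.castSucc (u i.castSucc)) (i : Fin n) :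
    blockCyclic A (scaledOrbit μ u) i.succ = μ • scaledOrbit μ u i.succ := by
  rw [blockCyclic_apply, sub_eq_iff_eq_add.mpr Fin.coeSucc_eq_succ.symm, scaledOrbit_apply,
    scaledOrbit_apply, map_smul, hu, smul_smul, ← zpow_one_add₀ hμ, Fin.val_castSucc, Fin.val_succ]
  congr 2
  push_cast
  ring

theorem blockCyclic_scaledOrbit_zero :
    blockCyclic A (scaledOrbit μ u) 0 = (μ ^ n)⁻¹ • A (Fin.last n) (u (Fin.last n)) := by
  rw [blockCyclic_apply, sub_eq_iff_eq_add.mpr (Fin.last_add_one n).symm, scaledOrbit_apply,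
    map_smul, Fin.val_last, zpow_neg, zpow_natCast]

theorem blockCyclic_scaledOrbit_eq_smul_iff (hμ : μ ≠ 0)
    (hu : ∀ i : Fin n, u i.succ = A i.castSucc (u i.castSucc)) :
    blockCyclic A (scaledOrbit μ u) = μ • scaledOrbit μ u ↔
      A (Fin.last n) (u (Fin.last n)) = μ ^ (n + 1) • u 0 := by
  simp only [funext_iff, Fin.forall_fin_succ, Pi.smul_apply,
    blockCyclic_scaledOrbit_succ A u hμ hu, implies_true, and_true, blockCyclic_scaledOrbit_zero]
  rw [scaledOrbit_apply, Fin.val_zero, Nat.cast_zero, neg_zero, zpow_zero, one_smul,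
    inv_smul_eq_iff₀ (pow_ne_zero n hμ), smul_smul, ← pow_succ]

end BlockCyclic

/-- eigenvalues of the block-cyclic unrolled map.
With `0`-indexed maps `A 0, …, A (m-1)` (standing for `A₁, …, A_m`), the
vector `w i = λ_k^{-i} • v_{i+1}`, where `v₁ := v` and `v_{j+1} := A_j v_j`,
is an eigenvector of the block-cyclic map
`M(x) i = A (i-1) (x (i-1))` (cyclic indices) with eigenvalue
`λ_k = λ·exp(2πik/m)` iff `v` is an eigenvector of the full cycle
`A_m ∘ ⋯ ∘ A₁` with eigenvalue `λ^m`. -/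
theorem block_cyclic_eigenvector_iff
    (V : Type*) [AddCommGroup V] [Module ℂ V]
    (m : ℕ) [NeZero m] (A : Fin m → V →ₗ[ℂ] V)
    (lam : ℂ) (hlam : lam ≠ 0) (k : Fin m)
    (lamk : ℂ) (hlamk : lamk = lam * Complex.exp (2 * Real.pi * Complex.I * k / m))
    (v : V) (u : Fin m → V)
    (hu0 : u 0 = v)
    (hu : ∀ i : Fin m, (i : ℕ) + 1 < m → u (i + 1) = A i (u i))
    (w : Fin m → V) (hw : ∀ i : Fin m, w i = lamk ^ (-(i : ℤ)) • u i) :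
    ((fun i : Fin m => A (i - 1) (w (i - 1))) = fun i : Fin m => lamk • w i) ↔
      A ⟨m - 1, Nat.sub_lt (Nat.pos_of_ne_zero (NeZero.ne m)) one_pos⟩
          (u ⟨m - 1, Nat.sub_lt (Nat.pos_of_ne_zero (NeZero.ne m)) one_pos⟩)
        = lam ^ m • v := by
  obtain ⟨n, rfl⟩ := Nat.exists_eq_succ_of_ne_zero (NeZero.ne m)
  obtain rfl : w = scaledOrbit lamk u := funext hw
  have hlamk_pow : lamk ^ (n + 1) = lam ^ (n + 1) := by
    rw [hlamk, mul_pow, exp_two_pi_mul_I_mul_div_pow_self k (NeZero.ne _), mul_one]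
  have hlamk0 : lamk ≠ 0 := hlamk ▸ mul_ne_zero hlam (exp_ne_zero _)
  have horbit (i : Fin n) : u i.succ = A i.castSucc (u i.castSucc) := by
    rw [← Fin.coeSucc_eq_succ]
    exact hu i.castSucc (by simp)
  rw [← hlamk_pow, ← hu0]
  exact blockCyclic_scaledOrbit_eq_smul_iff A u hlamk0 horbit
end

section
/- Fix a real number ν ≥ 1. For a sequence a : ℕ → ℂ define the weighted norm ‖a‖_ν := |a(0)| + 2·Σ_{α ≥ 1} |a(α)|·ν^α, and for a, b : ℕ → ℂ define the Chebyshev convolution (a * b)(α) := Σ_{β ∈ ℤ} a(|α − β|)·b(|β|), the sum ranging over all integers β. If ‖a‖_ν < ∞ and ‖b‖_ν < ∞, then for every α ∈ ℕ the series defining (a * b)(α) converges absolutely, and ‖a * b‖_ν ≤ ‖a‖_ν · ‖b‖_ν. -/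
/-- The weighted `ℓ¹_ν` norm of a Chebyshev coefficient sequence:
`‖a‖_ν = |a 0| + 2 Σ_{α ≥ 1} |a α| ν^α`. -/
noncomputable def chebNorm (ν : ℝ) (a : ℕ → ℂ) : ℝ :=
  ‖a 0‖ + 2 * ∑' α : ℕ, ‖a (α + 1)‖ * ν ^ (α + 1)

/-- The discrete Chebyshev convolution
`(a * b)(α) = Σ_{β ∈ ℤ} a(|α − β|) b(|β|)`. -/
noncomputable def chebConv (a b : ℕ → ℂ) : ℕ → ℂ :=
  fun α => ∑' β : ℤ, a ((α - β : ℤ).natAbs) * b β.natAbs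

lemma natAbs_neg_add_one (n : ℕ) : ((-(↑n + 1) : ℤ)).natAbs = n + 1 := by omega

lemma summable_natAbs' {g : ℕ → ℝ} (hg : Summable g) :
    Summable fun n : ℤ => g n.natAbs := by
  apply Summable.of_nat_of_neg_add_one
  · simpa using hg
  · have h1 : Summable fun n : ℕ => g (n + 1) := (summable_nat_add_iff 1).mpr hg
    exact h1.congr fun n => by rw [natAbs_neg_add_one]

lemma tsum_natAbs' {g : ℕ → ℝ} (hg : Summable g) :
    ∑' n : ℤ, g n.natAbs = g 0 + 2 * ∑' n : ℕ, g (n + 1) := by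
  have h1 : Summable fun n : ℕ => g (n + 1) := (summable_nat_add_iff 1).mpr hg
  have h1' : Summable fun n : ℕ => g ((-(↑n + 1) : ℤ).natAbs) :=
    h1.congr fun n => by rw [natAbs_neg_add_one]
  have h0' : Summable fun n : ℕ => g ((n : ℤ).natAbs) := by simpa using hg
  rw [tsum_of_nat_of_neg_add_one (f := fun n : ℤ => g n.natAbs) h0' h1']
  have h0 : ∑' n : ℕ, g ((n : ℤ).natAbs) = g 0 + ∑' n : ℕ, g (n + 1) := by
    simp only [Int.natAbs_natCast]
    rw [Summable.tsum_eq_zero_add hg]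
  have h2 : ∑' n : ℕ, g ((-(↑n + 1) : ℤ).natAbs) = ∑' n : ℕ, g (n + 1) :=
    tsum_congr fun n => by rw [natAbs_neg_add_one]
  rw [h0, h2]; ring

/-- Banach algebra property of `ℓ¹_ν` under Chebyshev
convolution. If `‖a‖_ν, ‖b‖_ν < ∞` (i.e. the weighted series are summable),
then each series defining `(a * b)(α)` converges absolutely, `a * b` again has
finite weighted norm, and `‖a * b‖_ν ≤ ‖a‖_ν ‖b‖_ν`. -/
theorem chebConv_norm_le
    (ν : ℝ) (hν : 1 ≤ ν) (a b : ℕ → ℂ)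
    (ha : Summable fun α : ℕ => ‖a α‖ * ν ^ α)
    (hb : Summable fun α : ℕ => ‖b α‖ * ν ^ α) :
    (∀ α : ℕ, Summable fun β : ℤ => ‖a ((α - β : ℤ).natAbs) * b β.natAbs‖) ∧
    (Summable fun α : ℕ => ‖chebConv a b α‖ * ν ^ α) ∧
    chebNorm ν (chebConv a b) ≤ chebNorm ν a * chebNorm ν b := by
  have hν0 : (0:ℝ) ≤ ν := le_trans zero_le_one hν
  set A : ℤ → ℝ := fun β => ‖a β.natAbs‖ * ν ^ β.natAbs with hAdef
  set B : ℤ → ℝ := fun β => ‖b β.natAbs‖ * ν ^ β.natAbs with hBdef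
  have hA : Summable A := summable_natAbs' (g := fun n => ‖a n‖ * ν ^ n) ha
  have hB : Summable B := summable_natAbs' (g := fun n => ‖b n‖ * ν ^ n) hb
  have hApos : ∀ β, 0 ≤ A β := fun β => by positivity
  have hBpos : ∀ β, 0 ≤ B β := fun β => by positivity
  have hle_a : ∀ n : ℕ, ‖a n‖ ≤ ‖a n‖ * ν ^ n := fun n =>
    le_mul_of_one_le_right (norm_nonneg _) (one_le_pow₀ hν)
  have hle_b : ∀ n : ℕ, ‖b n‖ ≤ ‖b n‖ * ν ^ n := fun n =>
    le_mul_of_one_le_right (norm_nonneg _) (one_le_pow₀ hν)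
  -- uniform bound on ‖a n‖
  obtain ⟨C, hC⟩ : ∃ C : ℝ, ∀ n : ℕ, ‖a n‖ ≤ C := by
    refine ⟨∑' n : ℕ, ‖a n‖ * ν ^ n, fun n => (hle_a n).trans ?_⟩
    exact Summable.le_tsum ha n fun m _ => by positivity
  -- part 1 (for all integer α)
  have part1 : ∀ α : ℤ, Summable fun β : ℤ => ‖a ((α - β : ℤ).natAbs) * b β.natAbs‖ := by
    intro α
    have : Summable fun β : ℤ => C * B β := hB.mul_left C
    refine this.of_nonneg_of_le (fun β => norm_nonneg _) fun β => ?_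
    rw [norm_mul]
    exact mul_le_mul (hC _) (hle_b _) (norm_nonneg _) ((norm_nonneg _).trans (hC 0))
  -- product summability
  have hAB : Summable fun p : ℤ × ℤ => A p.1 * B p.2 :=
    hA.mul_of_nonneg hB hApos hBpos
  let e : ℤ × ℤ ≃ ℤ × ℤ :=
    { toFun := fun p => (p.1 - p.2, p.2)
      invFun := fun p => (p.1 + p.2, p.2)
      left_inv := fun p => by simp
      right_inv := fun p => by simp }
  have hF : Summable fun p : ℤ × ℤ => A (p.1 - p.2) * B p.2 := by
    have h := (e.summable_iff (f := fun p : ℤ × ℤ => A p.1 * B p.2)).mpr hAB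
    exact h.congr fun p => rfl
  -- symmetric description of chebConv at integer indices
  have hconv : ∀ α : ℤ,
      chebConv a b α.natAbs = ∑' β : ℤ, a ((α - β : ℤ).natAbs) * b β.natAbs := by
    intro α
    rcases α with n | n
    · rfl
    · show chebConv a b (n + 1) = _
      rw [chebConv]
      rw [← (Equiv.neg ℤ).tsum_eq
        (fun β : ℤ => a ((Int.negSucc n - β).natAbs) * b β.natAbs)]
      congr 1
      funext β
      simp only [Equiv.neg_apply, Int.natAbs_neg]
      congr 2
      simp only [Int.negSucc_eq]
      omega
  -- key pointwise bound
  have key : ∀ α : ℤ, ‖chebConv a b α.natAbs‖ * ν ^ α.natAbs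
      ≤ ∑' β : ℤ, A (α - β) * B β := by
    intro α
    have h1 : ‖chebConv a b α.natAbs‖ ≤ ∑' β : ℤ, ‖a ((α - β : ℤ).natAbs) * b β.natAbs‖ := by
      rw [hconv α]
      exact norm_tsum_le_tsum_norm (part1 α)
    have h2 : (∑' β : ℤ, ‖a ((α - β : ℤ).natAbs) * b β.natAbs‖) * ν ^ α.natAbs
        ≤ ∑' β : ℤ, A (α - β) * B β := by
      rw [← tsum_mul_right]
      refine Summable.tsum_le_tsum (fun β => ?_) ((part1 α).mul_right _)
        (hF.prod_factor α)
      rw [norm_mul]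
      have htri : α.natAbs ≤ (α - β).natAbs + β.natAbs := by omega
      calc ‖a (α - β).natAbs‖ * ‖b β.natAbs‖ * ν ^ α.natAbs
          ≤ ‖a (α - β).natAbs‖ * ‖b β.natAbs‖ * ν ^ ((α - β).natAbs + β.natAbs) := by
            refine mul_le_mul_of_nonneg_left (pow_le_pow_right₀ hν htri) (by positivity)
        _ = A (α - β) * B β := by rw [pow_add]; ring
    calc ‖chebConv a b α.natAbs‖ * ν ^ α.natAbs
        ≤ (∑' β : ℤ, ‖a ((α - β : ℤ).natAbs) * b β.natAbs‖) * ν ^ α.natAbs :=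
          mul_le_mul_of_nonneg_right h1 (by positivity)
      _ ≤ _ := h2
  have hH : Summable fun α : ℤ => ∑' β : ℤ, A (α - β) * B β := by
    have := hF.prod
    simpa using this
  have hG : Summable fun α : ℤ => ‖chebConv a b α.natAbs‖ * ν ^ α.natAbs :=
    hH.of_nonneg_of_le (fun α => by positivity) key
  have hGnat : Summable fun α : ℕ => ‖chebConv a b α‖ * ν ^ α := by
    have h := hG.comp_injective (Nat.cast_injective (R := ℤ))
    exact h.congr fun n => by simp
  refine ⟨fun α => part1 α, hGnat, ?_⟩
  -- norm bound
  have hnormAB : ∑' β : ℤ, A β = chebNorm ν a := by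
    rw [tsum_natAbs' (g := fun n => ‖a n‖ * ν ^ n) ha, chebNorm]; simp
  have hnormB : ∑' β : ℤ, B β = chebNorm ν b := by
    rw [tsum_natAbs' (g := fun n => ‖b n‖ * ν ^ n) hb, chebNorm]; simp
  have hnormG : ∑' α : ℤ, ‖chebConv a b α.natAbs‖ * ν ^ α.natAbs
      = chebNorm ν (chebConv a b) := by
    rw [tsum_natAbs' (g := fun n => ‖chebConv a b n‖ * ν ^ n) hGnat, chebNorm]; simp
  rw [← hnormG, ← hnormAB, ← hnormB]
  calc ∑' α : ℤ, ‖chebConv a b α.natAbs‖ * ν ^ α.natAbs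
      ≤ ∑' α : ℤ, ∑' β : ℤ, A (α - β) * B β := Summable.tsum_le_tsum key hG hH
    _ = ∑' p : ℤ × ℤ, A (p.1 - p.2) * B p.2 := (Summable.tsum_prod hF).symm
    _ = ∑' p : ℤ × ℤ, A p.1 * B p.2 := by
        rw [← e.tsum_eq (fun p : ℤ × ℤ => A p.1 * B p.2)]
        exact tsum_congr fun p => rfl
    _ = (∑' β : ℤ, A β) * ∑' β : ℤ, B β := (Summable.tsum_mul_tsum hA hB hAB).symm
end

section
/- Let a, b : ℕ → ℂ be sequences with Σ_{α ≥ 0} |a(α)| < ∞ and Σ_{α ≥ 0} |b(α)| < ∞. Define f, g : [−1, 1] → ℂ by f(t) := a(0) + 2·Σ_{α ≥ 1} a(α)·T_α(t) and g(t) := b(0) + 2·Σ_{α ≥ 1} b(α)·T_α(t), where T_α denotes the Chebyshev polynomial of the first kind (T_α(cos θ) = cos(αθ)), and define the Chebyshev convolution (a * b)(α) := Σ_{β ∈ ℤ} a(|α − β|)·b(|β|), the sum ranging over all integers β. Then for every t ∈ [−1, 1], f(t)·g(t) = (a * b)(0) + 2·Σ_{α ≥ 1} (a * b)(α)·T_α(t),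 all series converging absolutely. -/
namespace ChebAux

open Complex

def ext (c : ℕ → ℂ) : ℤ → ℂ := fun n => c n.natAbs

lemma summable_ext {c : ℕ → ℂ} (hc : Summable fun α => ‖c α‖) :
    Summable fun n : ℤ => ‖ext c n‖ := by
  apply Summable.of_nat_of_neg
  · simpa [ext] using hc
  · simpa [ext] using hc

def e : ℤ × ℤ ≃ ℤ × ℤ where
  toFun w := (w.1 - w.2, w.2)
  invFun z := (z.1 + z.2, z.2)
  left_inv w := by simp
  right_inv z := by simp

lemma summable_H {a b : ℕ → ℂ} (ha : Summable fun α => ‖a α‖)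
    (hb : Summable fun α => ‖b α‖) :
    Summable fun w : ℤ × ℤ => ‖ext a (w.1 - w.2)‖ * ‖ext b w.2‖ := by
  have h0 : Summable fun z : ℤ × ℤ => ‖ext a z.1‖ * ‖ext b z.2‖ :=
    (summable_ext ha).mul_of_nonneg (summable_ext hb)
      (fun _ => norm_nonneg _) (fun _ => norm_nonneg _)
  exact h0.comp_injective (i := e) e.injective

lemma part1 {a b : ℕ → ℂ} (ha : Summable fun α => ‖a α‖)
    (hb : Summable fun α => ‖b α‖) (γ : ℤ) :
    Summable fun β : ℤ => ‖ext a (γ - β) * ext b β‖ := by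
  simp only [norm_mul]
  exact (summable_H ha hb).prod_factor γ

lemma conv_eq (a b : ℕ → ℂ) (γ : ℤ) :
    ∑' β : ℤ, ext a (γ - β) * ext b β = chebConv a b γ.natAbs := by
  rcases Int.natAbs_eq γ with h | h
  · rw [chebConv]
    apply tsum_congr
    intro β
    rw [ext, ext]
    congr 2
    omega
  · rw [chebConv]
    rw [← (Equiv.neg ℤ).tsum_eq (fun β => ext a (γ - β) * ext b β)]
    apply tsum_congr
    intro β
    simp only [Equiv.neg_apply]
    rw [ext, ext]
    congr 2
    · omega
    · omega

lemma part2 {a b : ℕ → ℂ} (ha : Summable fun α => ‖a α‖)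
    (hb : Summable fun α => ‖b α‖) :
    Summable fun α : ℕ => ‖chebConv a b α‖ := by
  have hH := summable_H ha hb
  have hrow : Summable fun γ : ℤ => ∑' β : ℤ, ‖ext a (γ - β)‖ * ‖ext b β‖ :=
    ((summable_prod_of_nonneg
      (fun w => mul_nonneg (norm_nonneg _) (norm_nonneg _))).mp hH).2
  have hrowN : Summable fun α : ℕ => ∑' β : ℤ, ‖ext a ((α : ℤ) - β)‖ * ‖ext b β‖ :=
    hrow.comp_injective (i := fun n : ℕ => (n : ℤ)) (fun x y h => by simpa using h)
  apply Summable.of_nonneg_of_le (fun _ => norm_nonneg _) _ hrowN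
  intro α
  have h1 : chebConv a b α = ∑' β : ℤ, ext a ((α : ℤ) - β) * ext b β := by
    rw [conv_eq]; norm_num
  rw [h1]
  refine (norm_tsum_le_tsum_norm ?_).trans_eq (tsum_congr fun β => norm_mul _ _)
  exact part1 ha hb (α : ℤ)

lemma key {c : ℕ → ℂ} (hc : Summable fun α => ‖c α‖) (θ : ℝ) :
    ∑' n : ℤ, ext c n * Complex.exp (n * θ * Complex.I)
      = c 0 + 2 * ∑' α : ℕ, c (α + 1) * ((Real.cos ((α + 1) * θ) : ℝ) : ℂ) := by
  set F : ℤ → ℂ := fun n => ext c n * Complex.exp (n * θ * Complex.I) with hF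
  have hnorm : ∀ n : ℤ, ‖F n‖ = ‖ext c n‖ := by
    intro n
    simp [hF, Complex.norm_exp]
  have hFsumm : Summable F := by
    apply Summable.of_norm
    simpa only [hnorm] using summable_ext hc
  have h1 : Summable fun n : ℕ => F (n + 1) :=
    hFsumm.comp_injective (i := fun n : ℕ => ((n : ℤ) + 1))
      (fun x y h => by simp only [add_left_inj, Int.natCast_inj] at h; exact h)
  have h2 : Summable fun n : ℕ => F (-(n + 1)) :=
    hFsumm.comp_injective (i := fun n : ℕ => (-((n : ℤ) + 1)))
      (fun x y h => by simp only [neg_inj, add_left_inj, Int.natCast_inj] at h; exact h)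
  rw [tsum_of_add_one_of_neg_add_one h1 h2]
  have hF0 : F 0 = c 0 := by simp [hF, ext]
  have hkey : ∀ n : ℕ, F (n + 1) + F (-(n + 1)) =
      2 * (c (n + 1) * ((Real.cos ((n + 1) * θ) : ℝ) : ℂ)) := by
    intro n
    have hext1 : ext c ((n : ℤ) + 1) = c (n + 1) := by
      show c ((n : ℤ) + 1).natAbs = c (n + 1)
      congr 1
    have hext2 : ext c (-((n : ℤ) + 1)) = c (n + 1) := by
      show c (-((n : ℤ) + 1)).natAbs = c (n + 1)
      congr 1
    have hexp : Complex.exp ((((n : ℤ) + 1) : ℤ) * θ * Complex.I) +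
        Complex.exp (((-((n : ℤ) + 1)) : ℤ) * θ * Complex.I)
        = 2 * ((Real.cos (((n : ℕ) + 1) * θ) : ℝ) : ℂ) := by
      rw [Complex.ofReal_cos]
      push_cast
      rw [show (-((n : ℂ) + 1)) * θ * Complex.I = -(((n : ℂ) + 1) * θ) * Complex.I by ring,
        Complex.exp_mul_I, Complex.exp_mul_I, Complex.cos_neg, Complex.sin_neg]
      ring
    calc F ((n : ℤ) + 1) + F (-((n : ℤ) + 1))
        = c (n + 1) * (Complex.exp ((((n : ℤ) + 1) : ℤ) * θ * Complex.I) +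
            Complex.exp (((-((n : ℤ) + 1)) : ℤ) * θ * Complex.I)) := by
          rw [hF]; simp only; rw [hext1, hext2]; ring
      _ = 2 * (c (n + 1) * ((Real.cos ((n + 1) * θ) : ℝ) : ℂ)) := by
          rw [hexp]; push_cast; ring
  have hsplit : (∑' n : ℕ, F (n + 1)) + (∑' n : ℕ, F (-(n + 1)))
      = ∑' n : ℕ, (F (n + 1) + F (-(n + 1))) := (Summable.tsum_add h1 h2).symm
  calc (∑' n : ℕ, F (n + 1)) + F 0 + ∑' n : ℕ, F (-(n + 1))
      = F 0 + ((∑' n : ℕ, F (n + 1)) + ∑' n : ℕ, F (-(n + 1))) := by ring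
    _ = c 0 + ∑' n : ℕ, (F (n + 1) + F (-(n + 1))) := by rw [hF0, hsplit]
    _ = c 0 + ∑' n : ℕ, 2 * (c (n + 1) * ((Real.cos ((n + 1) * θ) : ℝ) : ℂ)) := by
        rw [tsum_congr hkey]
    _ = c 0 + 2 * ∑' α : ℕ, c (α + 1) * ((Real.cos ((α + 1) * θ) : ℝ) : ℂ) := by
        rw [tsum_mul_left]

end ChebAux

open ChebAux Complex

/-- Chebyshev convolution represents pointwise products.
If `a, b` are absolutely summable Chebyshev coefficient sequences representing
`f, g` on `[−1, 1]`, then `a * b` represents `f·g`, all the series converging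
absolutely. Here `T_α` is the Chebyshev polynomial of the first kind. -/
theorem chebConv_represents_product
    (a b : ℕ → ℂ)
    (ha : Summable fun α : ℕ => ‖a α‖)
    (hb : Summable fun α : ℕ => ‖b α‖) :
    (∀ α : ℕ, Summable fun β : ℤ => ‖a ((α - β : ℤ).natAbs) * b β.natAbs‖) ∧
    (Summable fun α : ℕ => ‖chebConv a b α‖) ∧
    ∀ t ∈ Set.Icc (-1 : ℝ) 1,
      (a 0 + 2 * ∑' α : ℕ,
          a (α + 1) * (((Polynomial.Chebyshev.T ℝ ((α : ℤ) + 1)).eval t : ℝ) : ℂ)) *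
      (b 0 + 2 * ∑' α : ℕ,
          b (α + 1) * (((Polynomial.Chebyshev.T ℝ ((α : ℤ) + 1)).eval t : ℝ) : ℂ)) =
      chebConv a b 0 + 2 * ∑' α : ℕ,
          chebConv a b (α + 1) * (((Polynomial.Chebyshev.T ℝ ((α : ℤ) + 1)).eval t : ℝ) : ℂ) := by
  refine ⟨fun α => part1 ha hb (α : ℤ), part2 ha hb, ?_⟩
  intro t ht
  set θ := Real.arccos t with hθ
  have hcos : Real.cos θ = t := Real.cos_arccos ht.1 ht.2
  have hT : ∀ α : ℕ, ((Polynomial.Chebyshev.T ℝ ((α : ℤ) + 1)).eval t : ℝ)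
      = Real.cos (((α : ℕ) + 1) * θ) := by
    intro α
    rw [← hcos, Polynomial.Chebyshev.T_real_cos]
    push_cast
    rfl
  have hTr : ∀ (c : ℕ → ℂ),
      (∑' α : ℕ, c (α + 1) * (((Polynomial.Chebyshev.T ℝ ((α : ℤ) + 1)).eval t : ℝ) : ℂ))
      = ∑' α : ℕ, c (α + 1) * ((Real.cos ((α + 1) * θ) : ℝ) : ℂ) := by
    intro c
    apply tsum_congr
    intro α
    rw [hT α]
  rw [hTr a, hTr b, hTr (chebConv a b)]
  -- now express everything via bilateral exponential sums
  set Fa : ℤ → ℂ := fun n => ext a n * Complex.exp (n * θ * Complex.I) with hFa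
  set Fb : ℤ → ℂ := fun n => ext b n * Complex.exp (n * θ * Complex.I) with hFb
  have hna : Summable fun n : ℤ => ‖Fa n‖ := by
    have := summable_ext ha
    apply this.congr
    intro n
    simp [hFa, Complex.norm_exp]
  have hnb : Summable fun n : ℤ => ‖Fb n‖ := by
    have := summable_ext hb
    apply this.congr
    intro n
    simp [hFb, Complex.norm_exp]
  rw [← key ha θ, ← key hb θ, ← key (part2 ha hb) θ]
  rw [tsum_mul_tsum_of_summable_norm hna hnb]
  -- reindex
  have hre : (∑' z : ℤ × ℤ, Fa z.1 * Fb z.2)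
      = ∑' w : ℤ × ℤ, Fa (w.1 - w.2) * Fb w.2 :=
    (e.tsum_eq (fun z : ℤ × ℤ => Fa z.1 * Fb z.2)).symm
  rw [hre]
  -- Fubini
  have hsummW : Summable fun w : ℤ × ℤ => Fa (w.1 - w.2) * Fb w.2 := by
    apply Summable.of_norm
    apply (summable_H ha hb).congr
    intro w
    simp [hFa, hFb, norm_mul, Complex.norm_exp]
  rw [Summable.tsum_prod hsummW]
  apply tsum_congr
  intro γ
  have hinner : ∀ β : ℤ, Fa (γ - β) * Fb β
      = (ext a (γ - β) * ext b β) * Complex.exp (γ * θ * Complex.I) := by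
    intro β
    rw [hFa, hFb]
    simp only
    rw [mul_mul_mul_comm, ← Complex.exp_add]
    rw [show ((γ - β : ℤ) : ℂ) * θ * Complex.I + (β : ℂ) * θ * Complex.I
        = (γ : ℂ) * θ * Complex.I by push_cast; ring]
  calc ∑' β : ℤ, Fa (γ - β) * Fb β
      = ∑' β : ℤ, (ext a (γ - β) * ext b β) * Complex.exp (γ * θ * Complex.I) :=
        tsum_congr hinner
    _ = (∑' β : ℤ, ext a (γ - β) * ext b β) * Complex.exp (γ * θ * Complex.I) :=
        tsum_mul_right
    _ = ext (chebConv a b) γ * Complex.exp (γ * θ * Complex.I) := by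
        rw [conv_eq a b γ]; rfl
end

section
/- Let X and E be types. Let S : ℝ → (X → X) satisfy S(0) = id and S(t + s) = S(t) ∘ S(s) for all t, s ≥ 0, and let Λ : ℝ → (E → E) satisfy Λ(0) = id and Λ(t + s) = Λ(t) ∘ Λ(s) for all real t, s (so each Λ(t) is invertible with inverse Λ(−t)). Let τ > 0, m a positive natural number, F := S(τ), and let 𝓟_1, …, 𝓟_m : E → X satisfy, for every σ ∈ E, 𝓟_1(Λ(τ)(σ)) = F(𝓟_m(σ)) and 𝓟_j(Λ(τ)(σ)) = F(𝓟_{j−1}(σ)) for j = 2, …, m. Define P : ℝ≥0 × E → X by P(θ, σ) := S(θ)(𝓟_1(Λ(−θ)(σ))). Then: (a) P(θ + mτ, σ) = P(θ, σ) for all θ ≥ 0 and σ ∈ E; (b) P((j−1)τ, σ) = 𝓟_j(σ) for every j = 1, …, m and σ ∈ E; (c) P(t + θ, Λ(t)(σ)) = S(t)(P(θ, σ)) for all t, θ ≥ 0 and σ ∈ E. -/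
/-- from the discrete conjugacy to the continuous one.
Given a semiflow `S`, an invertible linear flow `Λ`, the time-τ map
`F = S(τ)`, and maps `Q 1, …, Q m` satisfying the discrete conjugacy
relations, the assembled map `P θ σ = S θ (Q 1 (Λ (−θ) σ))` is
`mτ`-periodic in `θ ≥ 0`, interpolates the `Q j` at `θ = (j−1)τ`, and
satisfies the continuous-time conjugacy with the semiflow. -/
theorem discrete_to_continuous_conjugacy
    (X E : Type*)
    (S : ℝ → X → X) (hS0 : S 0 = id)
    (hSadd : ∀ t s : ℝ, 0 ≤ t → 0 ≤ s → S (t + s) = S t ∘ S s)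
    (Λ : ℝ → E → E) (hΛ0 : Λ 0 = id)
    (hΛadd : ∀ t s : ℝ, Λ (t + s) = Λ t ∘ Λ s)
    (τ : ℝ) (hτ : 0 < τ) (m : ℕ) (hm : 0 < m)
    (F : X → X) (hF : F = S τ)
    (Q : ℕ → E → X)
    (hQ1 : ∀ σ : E, Q 1 (Λ τ σ) = F (Q m σ))
    (hQj : ∀ j : ℕ, 2 ≤ j → j ≤ m → ∀ σ : E, Q j (Λ τ σ) = F (Q (j - 1) σ))
    (P : ℝ → E → X) (hP : ∀ (θ : ℝ) (σ : E), P θ σ = S θ (Q 1 (Λ (-θ) σ))) :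
    (∀ θ : ℝ, 0 ≤ θ → ∀ σ : E, P (θ + m * τ) σ = P θ σ) ∧
    (∀ j : ℕ, 1 ≤ j → j ≤ m → ∀ σ : E, P (((j : ℝ) - 1) * τ) σ = Q j σ) ∧
    (∀ t : ℝ, 0 ≤ t → ∀ θ : ℝ, 0 ≤ θ → ∀ σ : E,
      P (t + θ) (Λ t σ) = S t (P θ σ)) := by
  have hΛ : ∀ (a b : ℝ) (σ : E), Λ a (Λ b σ) = Λ (a + b) σ := by
    intro a b σ; rw [hΛadd a b]; rfl
  -- Key: Q j pulled back to time (j-1)τ equals S((j-1)τ) ∘ Q 1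
  have key : ∀ j : ℕ, 1 ≤ j → j ≤ m → ∀ σ : E,
      Q j (Λ (((j : ℝ) - 1) * τ) σ) = S (((j : ℝ) - 1) * τ) (Q 1 σ) := by
    intro j
    induction j with
    | zero => intro h; exact absurd h (by norm_num)
    | succ k ih =>
      intro _ hle σ
      rcases Nat.eq_zero_or_pos k with hk0 | hk
      · subst hk0
        norm_num [hΛ0, hS0]
      · have hk2 : 2 ≤ k + 1 := by omega
        have hcast : ((k + 1 : ℕ) : ℝ) - 1 = (k : ℝ) := by push_cast; ring
        have hsplit : ((k : ℝ)) * τ = τ + ((k : ℝ) - 1) * τ := by ring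
        have hk1 : (0 : ℝ) ≤ (k : ℝ) - 1 := by
          have : (1 : ℝ) ≤ (k : ℝ) := by exact_mod_cast hk
          linarith
        have hQ := hQj (k + 1) hk2 hle (Λ (((k : ℝ) - 1) * τ) σ)
        simp only [Nat.add_sub_cancel] at hQ
        rw [hcast, hsplit, ← hΛ τ (((k : ℝ) - 1) * τ) σ, hQ,
          ih (by omega) (by omega) σ, hF,
          hSadd τ (((k : ℝ) - 1) * τ) hτ.le (by positivity)]
        rfl
  -- Q 1 pulled back by mτ
  have key2 : ∀ σ : E, Q 1 (Λ ((m : ℝ) * τ) σ) = S ((m : ℝ) * τ) (Q 1 σ) := by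
    intro σ
    have hsplit : ((m : ℝ)) * τ = τ + ((m : ℝ) - 1) * τ := by ring
    have hm1 : (0 : ℝ) ≤ (m : ℝ) - 1 := by
      have : (1 : ℝ) ≤ (m : ℝ) := by exact_mod_cast hm
      linarith
    rw [hsplit, ← hΛ τ (((m : ℝ) - 1) * τ) σ, hQ1, key m hm le_rfl σ, hF,
      hSadd τ (((m : ℝ) - 1) * τ) hτ.le (by positivity)]
    rfl
  refine ⟨?_, ?_, ?_⟩
  · intro θ hθ σ
    have hmτ : (0 : ℝ) ≤ (m : ℝ) * τ := by positivity
    rw [hP, hP, hSadd θ ((m : ℝ) * τ) hθ hmτ]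
    have : S ((m : ℝ) * τ) (Q 1 (Λ (-(θ + (m : ℝ) * τ)) σ))
        = Q 1 (Λ (-θ) σ) := by
      rw [← key2 (Λ (-(θ + (m : ℝ) * τ)) σ), hΛ]
      ring_nf
    simp only [Function.comp_apply, this]
  · intro j hj hjm σ
    have := key j hj hjm (Λ (-(((j : ℝ) - 1) * τ)) σ)
    rw [hΛ] at this
    simp only [add_neg_cancel, hΛ0, id] at this
    rw [hP, ← this]
  · intro t ht θ hθ σ
    rw [hP, hP, hSadd t θ ht hθ]
    have : Λ (-(t + θ)) (Λ t σ) = Λ (-θ) σ := by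
      rw [hΛ]; ring_nf
    simp only [Function.comp_apply, this]
end
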